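/- Define ζ_CB(s; z) := Σ_{m=1}^∞ (2z)^{2m}/(binom(2m,m)·m^s). For every integer n ≥ −1 and real z with 0 < z < 1, ζ_CB(−n; z) = z/(2^n(1−z²)^{n+3/2}) · ( z√(1−z²)·p_n(z²) + arcsin(z)·q_n(z²) ), where p_n, q_n are Lehmer's polynomials defined by p_{−1}=0, q_{−1}=1, p_{n+1}(x) = 2(nx+1)p_n(x)+2x(1−x)p_n'(x)+q_n(x), q_{n+1}(x) = (2(n+1)x+1)q_n(x)+2x(1−x)q_n'(x). -/

import Mathlib

/-!
Since `z d/dz` multiplies the `m`-th term of the series by `2m`, we have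
`ζ_CB(-n-1; z) = (z/2) d/dz ζ_CB(-n; z)`, and Lehmer's recurrences are exactly what `(z/2) d/dz`
does to the closed form; this is the induction step.

For the base case `n = -1`, the recurrence `(m+1) C(2m+2, m+1) = 2(2m+1) C(2m, m)` makes
`2(1 - z²) ζ_CB(0; z) - ζ_CB(1; z)` telescope to `2z²`, so `f = ζ_CB(1; ·)` solves
`z(1 - z²) f' = f + 2z²`. Hence `f(z) √(1 - z²) / z - 2 arcsin z` has zero derivative on `(0, 1)`,
and it tends to `0` at `0⁺` because `f(0) = f'(0) = 0`.
-/
open Polynomial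

/-- Lehmer's polynomials `q_n` for `n ≥ -1`, indexed so that `lehmerQ (n+1) = q_n`
(`lehmerQ 0 = q_{-1} = 1`), with recurrence
`q_{n+1}(x) = (2(n+1)x + 1) q_n(x) + 2x(1-x) q_n'(x)`. -/
noncomputable def lehmerQ : ℕ → Polynomial ℤ
  | 0 => 1
  | (k + 1) => (C (2 * (k : ℤ)) * X + 1) * lehmerQ k
      + 2 * X * (1 - X) * derivative (lehmerQ k)

/-- Lehmer's polynomials `p_n` for `n ≥ -1`, indexed so that `lehmerP (n+1) = p_n`
(`lehmerP 0 = p_{-1} = 0`), with recurrence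
`p_{n+1}(x) = 2(nx + 1) p_n(x) + 2x(1-x) p_n'(x) + q_n(x)`. -/
noncomputable def lehmerP : ℕ → Polynomial ℤ
  | 0 => 0
  | (k + 1) => 2 * (C ((k : ℤ) - 1) * X + 1) * lehmerP k
      + 2 * X * (1 - X) * derivative (lehmerP k) + lehmerQ k

open Filter Topology Set Real

lemma eq_of_hasDerivAt_zero_of_tendsto {E : Type*} [NormedAddCommGroup E] [NormedSpace ℝ E]
    {f : ℝ → E} {a b x : ℝ} {c : E} (hf : ∀ y ∈ Ioo a b, HasDerivAt f 0 y)
    (hlim : Tendsto f (𝓝[>] a) (𝓝 c)) (hx : x ∈ Ioo a b) : f x = c := by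
  have hconst : ∀ y ∈ Ioo a b, f y = f x := fun y hy ↦
    isOpen_Ioo.is_const_of_deriv_eq_zero (convex_Ioo a b).isPreconnected
      (fun y hy ↦ (hf y hy).differentiableAt.differentiableWithinAt) (fun y hy ↦ (hf y hy).deriv)
      hy hx
  refine tendsto_nhds_unique (tendsto_const_nhds.congr' ?_) hlim
  filter_upwards [Ioo_mem_nhdsGT (hx.1.trans hx.2)] with y hy using (hconst y hy).symm

lemma hasDerivAt_aeval_sq {𝕜 R : Type*} [NontriviallyNormedField 𝕜] [CommSemiring R]
    [Algebra R 𝕜] (p : R[X]) (x : 𝕜) :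
    HasDerivAt (fun y : 𝕜 ↦ aeval (y ^ 2) p) (aeval (x ^ 2) (derivative p) * (2 * x)) x := by
  have h := (p.hasDerivAt_aeval (x ^ 2)).comp x (hasDerivAt_pow 2 x)
  norm_num at h
  exact h

lemma hasDerivAt_sqrt_one_sub_sq {x : ℝ} (hx : |x| < 1) :
    HasDerivAt (fun y ↦ √(1 - y ^ 2)) (-x / √(1 - x ^ 2)) x := by
  have hw : 0 < 1 - x ^ 2 := sub_pos.2 ((sq_lt_one_iff_abs_lt_one x).2 hx)
  convert ((hasDerivAt_pow 2 x).const_sub 1).sqrt hw.ne' using 1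
  field_simp
  push_cast
  ring

lemma rpow_natCast_add_half {w : ℝ} (hw : 0 ≤ w) (k : ℕ) :
    w ^ ((k : ℝ) + 1 / 2) = √w ^ (2 * k + 1) := by
  rw [sqrt_eq_rpow, ← rpow_natCast, ← rpow_mul hw]
  push_cast
  ring_nf

lemma summable_succ_pow_mul_geometric (K : ℕ) {r : ℝ} (h0 : 0 ≤ r) (h1 : r < 1) :
    Summable fun m : ℕ ↦ ((m : ℝ) + 1) ^ K * r ^ (m + 1) := by
  have := summable_pow_mul_geometric_of_norm_lt_one K (by rwa [norm_of_nonneg h0] : ‖r‖ < 1)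
  exact_mod_cast (summable_nat_add_iff 1).2 this

lemma zpow_div_centralBinom_le (j : ℤ) (m : ℕ) :
    ((m : ℝ) + 1) ^ j / (m + 1).centralBinom ≤
      2 * ((m : ℝ) + 1) ^ (j.toNat + 1) / 4 ^ (m + 1) := by
  have hm : (1 : ℝ) ≤ m + 1 := le_add_of_nonneg_left m.cast_nonneg
  have hC : (0 : ℝ) < (m + 1).centralBinom := by exact_mod_cast (m + 1).centralBinom_pos
  have h4 : (4 : ℝ) ^ (m + 1) ≤ 2 * ((m : ℝ) + 1) * (m + 1).centralBinom := by
    exact_mod_cast Nat.four_pow_le_two_mul_self_mul_centralBinom (m + 1) m.succ_pos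
  have hj : ((m : ℝ) + 1) ^ j ≤ ((m : ℝ) + 1) ^ j.toNat :=
    (zpow_le_zpow_right₀ hm (Int.self_le_toNat j)).trans_eq (zpow_natCast _ _)
  rw [div_le_div_iff₀ hC (by positivity)]
  calc ((m : ℝ) + 1) ^ j * 4 ^ (m + 1)
      ≤ ((m : ℝ) + 1) ^ j.toNat * (2 * ((m : ℝ) + 1) * (m + 1).centralBinom) := by gcongr
    _ = 2 * ((m : ℝ) + 1) ^ (j.toNat + 1) * (m + 1).centralBinom := by ring

namespace ZetaCB

noncomputable def term (j : ℤ) (m : ℕ) (y : ℝ) : ℝ :=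
  (2 * y) ^ (2 * (m + 1)) * ((m : ℝ) + 1) ^ j / (m + 1).centralBinom

/-- `series j z = ζ_CB(-j; z)`; the summation index `m` stands for the paper's `m + 1`. -/
noncomputable def series (j : ℤ) (z : ℝ) : ℝ := ∑' m, term j m z

noncomputable def termDeriv (j : ℤ) (m : ℕ) (y : ℝ) : ℝ :=
  4 * (2 * y) ^ (2 * m + 1) * (((m : ℝ) + 1) ^ (j + 1) / (m + 1).centralBinom)

/-- The right-hand side of the theorem for `n = k - 1`, with `(1 - z²) ^ (n + 3/2)` written as
`√(1 - z²) ^ (2k + 1)`. -/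
noncomputable def closedForm (k : ℕ) (z : ℝ) : ℝ :=
  2 * z * (z * √(1 - z ^ 2) * aeval (z ^ 2) (lehmerP k) + arcsin z * aeval (z ^ 2) (lehmerQ k)) /
    (2 ^ k * √(1 - z ^ 2) ^ (2 * k + 1))

lemma hasDerivAt_term (j : ℤ) (m : ℕ) (y : ℝ) : HasDerivAt (term j m) (termDeriv j m y) y := by
  have h : HasDerivAt (term j m) ((2 * (m + 1) : ℕ) * (2 * y) ^ (2 * (m + 1) - 1) * (2 * 1) *
      ((m : ℝ) + 1) ^ j / (m + 1).centralBinom) y :=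
    ((((hasDerivAt_id y).const_mul 2).pow _).mul_const _).div_const _
  convert h using 1
  rw [termDeriv, zpow_add_one₀ (by positivity), show 2 * (m + 1) - 1 = 2 * m + 1 by omega]
  push_cast
  ring

lemma mul_termDeriv (j : ℤ) (m : ℕ) (y : ℝ) : y * termDeriv j m y = 2 * term (j + 1) m y := by
  rw [termDeriv, term, show 2 * (m + 1) = 2 * m + 1 + 1 by ring, pow_succ]
  ring

lemma mul_tsum_termDeriv (j : ℤ) (z : ℝ) :
    z * ∑' m, termDeriv j m z = 2 * series (j + 1) z := by
  rw [← tsum_mul_left, series, ← tsum_mul_left]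
  exact tsum_congr (mul_termDeriv j · z)

lemma abs_termDeriv_le (j : ℤ) (m : ℕ) {b y : ℝ} (hb : b ≤ 1) (hy : |y| ≤ b) :
    |termDeriv j m y| ≤ 4 * (((m : ℝ) + 1) ^ ((j + 1).toNat + 1) * b ^ (m + 1)) := by
  have hb0 : 0 ≤ b := (abs_nonneg y).trans hy
  have hy' : |y| ^ (2 * m + 1) ≤ b ^ (m + 1) :=
    (pow_le_pow_left₀ (abs_nonneg y) hy _).trans (pow_le_pow_of_le_one hb0 hb (by omega))
  have h4 : (4 : ℝ) ^ (m + 1) = 2 * 2 ^ (2 * m + 1) := by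
    rw [pow_succ, pow_succ, pow_mul]; norm_num; ring
  have hc : (0 : ℝ) ≤ ((m : ℝ) + 1) ^ (j + 1) / (m + 1).centralBinom := by positivity
  simp only [termDeriv, abs_mul, abs_of_nonneg hc, abs_pow, mul_pow, abs_two,
    abs_of_pos (four_pos : (0 : ℝ) < 4)]
  calc 4 * (2 ^ (2 * m + 1) * |y| ^ (2 * m + 1)) * (((m : ℝ) + 1) ^ (j + 1) / (m + 1).centralBinom)
      ≤ 4 * (2 ^ (2 * m + 1) * b ^ (m + 1)) *
          (2 * ((m : ℝ) + 1) ^ ((j + 1).toNat + 1) / 4 ^ (m + 1)) :=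
        mul_le_mul (by gcongr) (zpow_div_centralBinom_le _ m) hc (by positivity)
    _ = 4 * (((m : ℝ) + 1) ^ ((j + 1).toNat + 1) * b ^ (m + 1)) := by
        rw [h4]; field_simp

lemma summable_termDeriv (j : ℤ) {z : ℝ} (hz : |z| < 1) : Summable (termDeriv j · z) :=
  .of_norm_bounded ((summable_succ_pow_mul_geometric _ (abs_nonneg z) hz).mul_left 4)
    fun m ↦ abs_termDeriv_le j m hz.le le_rfl

lemma summable_term (j : ℤ) {z : ℝ} (hz : |z| < 1) : Summable (term j · z) := by
  refine ((summable_termDeriv (j - 1) hz).mul_left (z / 2)).congr fun m ↦ ?_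
  rw [div_mul_eq_mul_div, mul_termDeriv, sub_add_cancel]
  ring

lemma hasDerivAt_series (j : ℤ) {z : ℝ} (hz : |z| < 1) :
    HasDerivAt (series j) (∑' m, termDeriv j m z) z := by
  obtain ⟨b, hzb, hb⟩ := exists_between hz
  have hz_mem : z ∈ Metric.ball 0 b := by rwa [mem_ball_zero_iff, norm_eq_abs]
  exact hasDerivAt_tsum_of_isPreconnected
    ((summable_succ_pow_mul_geometric _ ((abs_nonneg z).trans hzb.le) hb).mul_left 4)
    Metric.isOpen_ball (convex_ball 0 b).isPreconnected (fun m y _ ↦ hasDerivAt_term j m y)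
    (fun m y hy ↦ abs_termDeriv_le j m hb.le (by simpa using (mem_ball_zero_iff.1 hy).le))
    hz_mem (summable_term j hz) hz_mem

lemma series_zero_right (j : ℤ) : series j 0 = 0 := by simp [series, term]

lemma tendsto_inv_mul_series_nhdsGT_zero (j : ℤ) :
    Tendsto (fun y ↦ y⁻¹ * series j y) (𝓝[>] 0) (𝓝 0) := by
  have h := (hasDerivAt_series j (by simp : |(0 : ℝ)| < 1)).tendsto_slope_zero_right
  simpa [series_zero_right, termDeriv] using h

lemma term_zero_eq_mul_term_neg_one (m : ℕ) (z : ℝ) :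
    term 0 m z = ((m : ℝ) + 1) * term (-1) m z := by
  simp only [term, zpow_zero, zpow_neg_one]
  field_simp

lemma term_neg_one_succ (m : ℕ) (z : ℝ) :
    (2 * (m : ℝ) + 3) * term (-1) (m + 1) z = 2 * ((m : ℝ) + 1) * z ^ 2 * term (-1) m z := by
  have hC := Nat.succ_mul_centralBinom_succ (m + 1)
  have hC₀ : (0 : ℝ) < (m + 1).centralBinom := by exact_mod_cast (m + 1).centralBinom_pos
  have hC₁ : (0 : ℝ) < (m + 1 + 1).centralBinom := by exact_mod_cast (m + 1 + 1).centralBinom_pos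
  simp only [term, zpow_neg_one, show 2 * (m + 1 + 1) = 2 * (m + 1) + 2 by ring, pow_add]
  field_simp
  rw [← Nat.cast_inj (R := ℝ)] at hC
  push_cast at hC ⊢
  linear_combination -(z ^ 2 * (2 * z) ^ (2 * (m + 1))) * hC

lemma series_neg_one_eq {z : ℝ} (hz : |z| < 1) :
    series (-1) z = 2 * (1 - z ^ 2) * series 0 z - 2 * z ^ 2 := by
  set d : ℕ → ℝ := fun m ↦ (2 * (m : ℝ) + 1) * term (-1) m z
  have hd : Summable d := ((summable_term 0 hz).mul_left 2 |>.sub (summable_term (-1) hz)).congr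
    fun m ↦ by simp only [d, term_zero_eq_mul_term_neg_one]; ring
  have htel : ∀ m, 2 * (1 - z ^ 2) * term 0 m z - term (-1) m z = d m - d (m + 1) := fun m ↦ by
    simp only [d, term_zero_eq_mul_term_neg_one]
    push_cast
    linear_combination term_neg_one_succ m z
  have hd₀ : d 0 = 2 * z ^ 2 := by simp [d, term, show Nat.centralBinom 1 = 2 from rfl]; ring
  have hsum : ∑' m, (d m - d (m + 1)) = d 0 := by
    rw [hd.tsum_sub ((summable_nat_add_iff 1).2 hd), hd.tsum_eq_zero_add]
    ring
  have : 2 * (1 - z ^ 2) * series 0 z - series (-1) z = 2 * z ^ 2 := by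
    rw [series, series, ← tsum_mul_left, ← ((summable_term 0 hz).mul_left _).tsum_sub
      (summable_term (-1) hz), tsum_congr htel, hsum, hd₀]
  linarith

lemma hasDerivAt_series_neg_one {x : ℝ} (hx₀ : x ≠ 0) (hx : |x| < 1) :
    HasDerivAt (series (-1)) ((series (-1) x + 2 * x ^ 2) / (x * (1 - x ^ 2))) x := by
  have hw : 1 - x ^ 2 ≠ 0 := (sub_pos.2 ((sq_lt_one_iff_abs_lt_one x).2 hx)).ne'
  convert hasDerivAt_series (-1) hx using 1
  rw [series_neg_one_eq hx, eq_comm, ← mul_right_inj' hx₀, mul_tsum_termDeriv, neg_add_cancel]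
  field_simp
  ring

theorem series_neg_one_eq_arcsin {z : ℝ} (hz : z ∈ Ioo 0 1) :
    series (-1) z = 2 * z * arcsin z / √(1 - z ^ 2) := by
  set K : ℝ → ℝ := fun y ↦ y⁻¹ * series (-1) y * √(1 - y ^ 2) - 2 * arcsin y
  have hK : ∀ y ∈ Ioo (0 : ℝ) 1, HasDerivAt K 0 y := by
    intro y ⟨hy₀, hy₁⟩
    have hy : |y| < 1 := by rw [abs_of_pos hy₀]; exact hy₁
    have hw : 0 < 1 - y ^ 2 := by nlinarith
    have hs : √(1 - y ^ 2) ^ 2 = 1 - y ^ 2 := sq_sqrt hw.le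
    have hd : HasDerivAt K _ y := (((hasDerivAt_inv hy₀.ne').mul
      (hasDerivAt_series_neg_one hy₀.ne' hy)).mul (hasDerivAt_sqrt_one_sub_sq hy)).sub
      ((hasDerivAt_arcsin (by linarith) hy₁.ne).const_mul 2)
    convert hd using 1
    simp only [Pi.mul_apply]
    field_simp
    linear_combination (-(2 * y ^ 2) - y ^ 2 * series (-1) y) * hs
  have hlim : Tendsto K (𝓝[>] 0) (𝓝 0) := by
    have hS : Tendsto (fun y : ℝ ↦ √(1 - y ^ 2)) (𝓝[>] 0) (𝓝 1) :=
      ((continuous_const.sub (continuous_pow 2)).sqrt.tendsto' 0 1 (by simp)).mono_left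
        nhdsWithin_le_nhds
    have hA : Tendsto arcsin (𝓝[>] 0) (𝓝 0) :=
      (continuous_arcsin.tendsto' 0 0 arcsin_zero).mono_left nhdsWithin_le_nhds
    simpa using ((tendsto_inv_mul_series_nhdsGT_zero (-1)).mul hS).sub (hA.const_mul 2)
  have hK0 : K z = 0 := eq_of_hasDerivAt_zero_of_tendsto hK hlim hz
  have hs : 0 < √(1 - z ^ 2) := sqrt_pos.2 (by nlinarith [hz.1, hz.2])
  have hz₀ := hz.1.ne'
  simp only [K] at hK0
  field_simp at hK0 ⊢
  linarith

lemma hasDerivAt_closedForm (k : ℕ) {z : ℝ} (hz₀ : z ≠ 0) (hz : |z| < 1) :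
    HasDerivAt (closedForm k) (2 / z * closedForm (k + 1) z) z := by
  have hw : 0 < 1 - z ^ 2 := sub_pos.2 ((sq_lt_one_iff_abs_lt_one z).2 hz)
  have hs : √(1 - z ^ 2) ^ 2 = 1 - z ^ 2 := sq_sqrt hw.le
  have hs₀ : √(1 - z ^ 2) ≠ 0 := (sqrt_pos.2 hw).ne'
  have hS := hasDerivAt_sqrt_one_sub_sq hz
  have hA := hasDerivAt_arcsin (x := z) (by linarith [neg_abs_le z]) (by linarith [le_abs_self z])
  have hd : HasDerivAt (closedForm k) _ z :=
    (((hasDerivAt_id z).const_mul 2).mul ((((hasDerivAt_id z).mul hS).mul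
      (hasDerivAt_aeval_sq (lehmerP k) z)).add (hA.mul (hasDerivAt_aeval_sq (lehmerQ k) z)))).div
      ((hS.pow (2 * k + 1)).const_mul (2 ^ k)) (by positivity)
  convert hd using 1
  simp only [closedForm, lehmerP, lehmerQ, map_add, map_mul, map_sub, map_one, map_ofNat, aeval_X,
    aeval_C, id, show 2 * k + 1 - 1 = 2 * k by omega, show 2 * (k + 1) + 1 = 2 * k + 1 + 2 by ring,
    pow_add, pow_one, Pi.mul_apply, Pi.add_apply]
  push_cast
  have hT : √(1 - z ^ 2) ^ (2 * k) ≠ 0 := pow_ne_zero _ hs₀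
  generalize √(1 - z ^ 2) ^ (2 * k) = T at hT
  generalize √(1 - z ^ 2) = s at hs hs₀ hT ⊢
  field_simp
  linear_combination
    -(2 * z * s * aeval (z ^ 2) (lehmerP k) + arcsin z * aeval (z ^ 2) (lehmerQ k) +
      2 * z ^ 2 * (z * s * aeval (z ^ 2) (derivative (lehmerP k)) +
        arcsin z * aeval (z ^ 2) (derivative (lehmerQ k)))) * hs

theorem series_eq_closedForm (k : ℕ) {z : ℝ} (hz : z ∈ Ioo 0 1) :
    series (k - 1) z = closedForm k z := by
  induction k generalizing z with
  | zero => simpa [closedForm, lehmerP, lehmerQ] using series_neg_one_eq_arcsin hz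
  | succ k ih =>
    have hz' : |z| < 1 := by rw [abs_of_pos hz.1]; exact hz.2
    have heq : series (k - 1) =ᶠ[𝓝 z] closedForm k :=
      eventually_of_mem (isOpen_Ioo.mem_nhds hz) fun y hy ↦ ih hy
    have hD := (hasDerivAt_series (k - 1) hz').unique
      ((hasDerivAt_closedForm k hz.1.ne' hz').congr_of_eventuallyEq heq)
    calc series ((k + 1 : ℕ) - 1) z = z * (∑' m, termDeriv (k - 1) m z) / 2 := by
          rw [mul_tsum_termDeriv, show ((k + 1 : ℕ) : ℤ) - 1 = (k : ℤ) - 1 + 1 by push_cast; ring]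
          ring
      _ = closedForm (k + 1) z := by rw [hD]; field_simp [hz.1.ne']

end ZetaCB

theorem zetaCB_neg_integer (n : ℤ) (hn : -1 ≤ n) (z : ℝ) (hz0 : 0 < z) (hz1 : z < 1) :
    ∑' m : ℕ, (2 * z) ^ (2 * (m + 1)) * ((m : ℝ) + 1) ^ n /
        (Nat.choose (2 * (m + 1)) (m + 1) : ℝ) =
      z / ((2 : ℝ) ^ n * (1 - z ^ 2) ^ ((n : ℝ) + 3 / 2)) *
        (z * Real.sqrt (1 - z ^ 2) * aeval (z ^ 2) (lehmerP (n + 1).toNat) +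
          Real.arcsin z * aeval (z ^ 2) (lehmerQ (n + 1).toNat)) := by
  obtain ⟨k, rfl⟩ : ∃ k : ℕ, n = k - 1 := ⟨(n + 1).toNat, by omega⟩
  have hw : 0 < 1 - z ^ 2 := by nlinarith
  have hs : 0 < √(1 - z ^ 2) := sqrt_pos.2 hw
  change ZetaCB.series (k - 1) z = _
  rw [ZetaCB.series_eq_closedForm k ⟨hz0, hz1⟩, ZetaCB.closedForm,
    show ((k : ℤ) - 1 + 1).toNat = k by omega, zpow_sub_one₀ two_ne_zero, zpow_natCast,
    show (((k : ℤ) - 1 : ℤ) : ℝ) + 3 / 2 = (k : ℝ) + 1 / 2 by push_cast; ring,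
    rpow_natCast_add_half hw.le]
  field_simp
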